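/- Let k be a field of prime characteristic p, S = k[x_1,…,x_N] the standard graded polynomial ring, and f_1,…,f_t a regular sequence of homogeneous polynomials of positive degree. Set R = S/(f_1,…,f_t) with homogeneous maximal ideal m, and let I ⊆ R be a homogeneous m-primary ideal. Let s = max{ r ∈ ℕ : m^r ⊄ I } and a = (deg f_1 + ⋯ + deg f_t) − N. Then for every q = p^e one has max{ r ∈ ℕ : m^r ⊄ I^{[q]} } ≥ (s − a)q + a. -/

import Mathlib

set_option synthInstance.maxHeartbeats 1000000
set_option maxHeartbeats 1000000

open MvPolynomial

/-- The `q`-th Frobenius power of an ideal: the ideal generated by the `q`-th powers of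
its elements. -/
noncomputable def frobPow {R : Type*} [CommRing R] (I : Ideal R) (q : ℕ) : Ideal R :=
  Ideal.span ((fun a => a ^ q) '' (I : Set R))

/-- `nu m J = max { r ∈ ℕ : m^r ⊄ J }`, the top socle degree of `R/J`. -/
noncomputable def nu {R : Type*} [CommRing R] (m J : Ideal R) : ℕ :=
  sSup {r : ℕ | ¬ m ^ r ≤ J}

/-! Pull everything back to the polynomial ring `S`: let `J ⊆ S` be the preimage of `I`, so that
`J` is homogeneous, contains the `f i`, and a homogeneous `z ∉ J` of degree `s` exists. Frobenius
is flat on `S`, which here takes the explicit form of a semilinear contraction undoing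
`g ↦ g ^ q * X ^ ρ`; with `ρ = (q - 1, …, q - 1)` it shows `z ^ q * X ^ ρ ∉ J^[q]`, an element
of degree `s q + N (q - 1)`. Since `f i ^ q ∈ J^[q]`, adjoining `f i` to a homogeneous ideal
containing `f i ^ q` lowers the largest degree of a homogeneous element outside it by at most
`(q - 1) deg f i` (induction on `q` through the colon ideals `K : f i`). Adjoining all the `f i`
leaves a homogeneous element outside `J^[q] + (f)` of degree at least
`s q + N (q - 1) - (q - 1) ∑ deg f i = (s - a) q + a`, and `J^[q] + (f)` is the preimage of
`I^[q]`. -/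

attribute [local instance] MvPolynomial.gradedAlgebra

section TopSocleDegree

variable {R : Type*} [CommRing R]

lemma nu_map_eq_nu_comap {S : Type*} [CommRing S] (φ : R →+* S) (m : Ideal R) (J : Ideal S) :
    nu (m.map φ) J = nu m (J.comap φ) := by
  simp only [nu, ← Ideal.map_pow, Ideal.map_le_iff_le_comap]

lemma bddAbove_setOf_not_pow_le {m J : Ideal R} (hmJ : ∃ K, m ^ K ≤ J) :
    BddAbove {r | ¬ m ^ r ≤ J} := by
  obtain ⟨K, hK⟩ := hmJ
  refine ⟨K, fun n hn => ?_⟩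
  by_contra! hKn
  exact hn ((Ideal.pow_le_pow_right hKn.le).trans hK)

lemma le_nu_of_not_pow_le {m J : Ideal R} (hmJ : ∃ K, m ^ K ≤ J) {r : ℕ} (hr : ¬ m ^ r ≤ J) :
    r ≤ nu m J :=
  le_csSup (bddAbove_setOf_not_pow_le hmJ) hr

lemma not_pow_nu_le {m J : Ideal R} (hmJ : ∃ K, m ^ K ≤ J) (hJ : J ≠ ⊤) :
    ¬ m ^ nu m J ≤ J :=
  Nat.sSup_mem ⟨0, by simpa [top_le_iff] using hJ⟩ (bddAbove_setOf_not_pow_le hmJ)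

lemma pow_nu_succ_le {m J : Ideal R} (hmJ : ∃ K, m ^ K ≤ J) : m ^ (nu m J + 1) ≤ J := by
  by_contra h
  exact (le_nu_of_not_pow_le hmJ h).not_gt (Nat.lt_succ_self _)

lemma exists_pow_le_frobPow {m J : Ideal R} (hm : m.FG) (hmJ : ∃ K, m ^ K ≤ J) (q : ℕ) :
    ∃ K, m ^ K ≤ frobPow J q := by
  obtain ⟨K, hK⟩ := hmJ
  refine Ideal.exists_pow_le_of_le_radical_of_fg (fun x hx => ⟨K * q, ?_⟩) hm
  rw [pow_mul]
  exact Ideal.subset_span ⟨x ^ K, hK (Ideal.pow_mem_pow hx K), rfl⟩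

lemma frobPow_map_of_surjective {S : Type*} [CommRing S] {φ : R →+* S}
    (hφ : Function.Surjective φ) (J : Ideal R) (q : ℕ) :
    frobPow (J.map φ) q = (frobPow J q).map φ := by
  have hJφ : (J.map φ : Set S) = φ '' J :=
    Set.ext fun _ => Ideal.mem_map_iff_of_surjective φ hφ
  rw [frobPow, frobPow, Ideal.map_span, hJφ, Set.image_image, Set.image_image]
  simp only [map_pow]

lemma frobPow_span (p : ℕ) [ExpChar R p] (e : ℕ) (A : Set R) :
    frobPow (Ideal.span A) (p ^ e) = Ideal.span ((· ^ p ^ e) '' A) := by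
  refine le_antisymm (Ideal.span_le.2 ?_) (Ideal.span_mono (Set.image_mono Ideal.subset_span))
  rintro _ ⟨x, hx, rfl⟩
  induction hx using Submodule.span_induction with
  | mem y hy => exact Ideal.subset_span ⟨y, hy, rfl⟩
  | zero => simp [zero_pow (expChar_pow_pos R p e).ne']
  | add u v _ _ hu hv => simpa [add_pow_expChar_pow] using Ideal.add_mem _ hu hv
  | smul r u _ hu => simpa [mul_pow] using Ideal.mul_mem_left _ _ hu

end TopSocleDegree

lemma Ideal.IsHomogeneous.frobPow {ι σ A : Type*} [DecidableEq ι] [AddMonoid ι] [CommRing A]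
    [SetLike σ A] [AddSubmonoidClass σ A] {𝒜 : ι → σ} [GradedRing 𝒜] {J : Ideal A}
    (hJ : J.IsHomogeneous 𝒜) (p : ℕ) [ExpChar A p] (e : ℕ) :
    (_root_.frobPow J (p ^ e)).IsHomogeneous 𝒜 := by
  obtain ⟨S, rfl⟩ := (Ideal.IsHomogeneous.iff_exists 𝒜 J).1 hJ
  rw [frobPow_span, Set.image_image]
  exact Ideal.homogeneous_span _ _ (by rintro _ ⟨s, _, rfl⟩; exact pow_mem s.2 _)

lemma RingHom.exists_semilinear_retraction {k : Type*} [Field k] (φ : k →+* k) :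
    ∃ τ : k →+ k, τ 1 = 1 ∧ ∀ c d, τ (φ c * d) = c * τ d := by
  let e := φ.rangeRestrictFieldEquiv
  obtain ⟨θ, hθ⟩ := (Algebra.linearMap φ.fieldRange k).exists_leftInverse_of_injective
    (LinearMap.ker_eq_bot.2 (FaithfulSMul.algebraMap_injective _ _))
  refine ⟨e.symm.toAddMonoidHom.comp θ.toAddMonoidHom, ?_, fun c d => ?_⟩
  · simpa using congr(e.symm ($hθ 1))
  · have : φ c * d = e c • d := rfl
    simp [this]

lemma Nat.mul_le_mul_add_iff_le {q a c r : ℕ} (hr : r < q) : q * a ≤ q * c + r ↔ a ≤ c := by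
  refine ⟨fun h => ?_, fun h => (Nat.mul_le_mul_left q h).trans (Nat.le_add_right _ _)⟩
  by_contra! hca
  have := Nat.mul_le_mul_left q (Nat.succ_le_of_lt hca)
  rw [Nat.mul_succ] at this
  omega

namespace MvPolynomial

variable {σ R : Type*} [CommRing R]

lemma coe_decompose_homogeneousSubmodule (p : MvPolynomial σ R) (n : ℕ) :
    (DirectSum.decompose (homogeneousSubmodule σ R) p n : MvPolynomial σ R) =
      homogeneousComponent n p :=
  decomposition.decompose'_apply p n

lemma isHomogeneous_of_homogeneousComponent_mem {I : Ideal (MvPolynomial σ R)}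
    (h : ∀ p ∈ I, ∀ n, homogeneousComponent n p ∈ I) :
    I.IsHomogeneous (homogeneousSubmodule σ R) :=
  fun n p hp => by rw [coe_decompose_homogeneousSubmodule]; exact h p hp n

lemma homogeneousComponent_mul_of_isHomogeneous {f : MvPolynomial σ R} {d : ℕ}
    (hf : f.IsHomogeneous d) (g : MvPolynomial σ R) (n : ℕ) :
    homogeneousComponent n (f * g) = if d ≤ n then f * homogeneousComponent (n - d) g else 0 := by
  simpa only [coe_decompose_homogeneousSubmodule] using
    DirectSum.coe_decompose_mul_of_left_mem (homogeneousSubmodule σ R) n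
      (show f ∈ homogeneousSubmodule σ R d from hf) (b := g)

lemma _root_.Ideal.IsHomogeneous.colon_span_singleton {K : Ideal (MvPolynomial σ R)}
    (hK : K.IsHomogeneous (homogeneousSubmodule σ R)) {f : MvPolynomial σ R} {d : ℕ}
    (hf : f.IsHomogeneous d) :
    (K.colon (Ideal.span {f})).IsHomogeneous (homogeneousSubmodule σ R) := by
  refine isHomogeneous_of_homogeneousComponent_mem fun g hg n => ?_
  rw [Ideal.mem_colon_span_singleton] at hg ⊢
  have := homogeneousComponent_mem_of_mem hK hg (n + d)
  rwa [mul_comm, homogeneousComponent_mul_of_isHomogeneous hf, if_pos (by omega),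
    Nat.add_sub_cancel, mul_comm] at this

lemma IsHomogeneous.mem_pow_idealOfVars {p : MvPolynomial σ R} {n : ℕ} (hp : p.IsHomogeneous n) :
    p ∈ idealOfVars σ R ^ n :=
  (mem_pow_idealOfVars_iff n p).2 fun x hx => by
    rw [Finsupp.degree_eq_weight_one]
    exact (hp (mem_support_iff.1 hx)).ge

lemma homogeneousComponent_eq_zero_of_mem_pow_idealOfVars {p : MvPolynomial σ R} {T n : ℕ}
    (hp : p ∈ idealOfVars σ R ^ T) (hn : n < T) : homogeneousComponent n p = 0 := by
  ext x
  rw [coeff_homogeneousComponent, coeff_zero]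
  split_ifs with hx
  · exact (mem_pow_idealOfVars_iff' T p).1 hp x (hx ▸ hn)
  · rfl

lemma exists_isHomogeneous_not_mem_of_not_pow_le {K : Ideal (MvPolynomial σ R)}
    (hK : K.IsHomogeneous (homogeneousSubmodule σ R)) {T : ℕ}
    (hT : ¬ idealOfVars σ R ^ T ≤ K) (hT1 : idealOfVars σ R ^ (T + 1) ≤ K) :
    ∃ z : MvPolynomial σ R, z.IsHomogeneous T ∧ z ∉ K := by
  obtain ⟨v, hvT, hvK⟩ := SetLike.not_le_iff_exists.1 hT
  obtain ⟨n, hn⟩ : ∃ n, homogeneousComponent n v ∉ K := by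
    by_contra! h
    exact hvK ((mem_iff_homogeneousComponent_mem hK v).2 h)
  obtain hlt | rfl | hgt := lt_trichotomy n T
  · exact absurd (by simp [homogeneousComponent_eq_zero_of_mem_pow_idealOfVars hvT hlt]) hn
  · exact ⟨_, homogeneousComponent_isHomogeneous n v, hn⟩
  · exact absurd (hT1 (Ideal.pow_le_pow_right hgt
      (homogeneousComponent_isHomogeneous n v).mem_pow_idealOfVars)) hn

lemma exists_isHomogeneous_not_mem_colon {K : Ideal (MvPolynomial σ R)}
    (hK : K.IsHomogeneous (homogeneousSubmodule σ R)) {f z : MvPolynomial σ R} {d T : ℕ}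
    (hf : f.IsHomogeneous d) (hz : z.IsHomogeneous T) (hzf : z ∈ K ⊔ Ideal.span {f})
    (hzK : z ∉ K) :
    d ≤ T ∧ ∃ z' : MvPolynomial σ R, z'.IsHomogeneous (T - d) ∧ z' ∉ K.colon (Ideal.span {f}) := by
  obtain ⟨x, hx, y, hy, rfl⟩ := Submodule.mem_sup.1 hzf
  obtain ⟨g, rfl⟩ := Ideal.mem_span_singleton'.1 hy
  have hT : x + g * f = homogeneousComponent T x + homogeneousComponent T (f * g) := by
    rw [mul_comm f g, ← map_add, homogeneousComponent_of_mem hz, if_pos rfl]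
  have hxT := homogeneousComponent_mem_of_mem hK hx T
  rw [hT, homogeneousComponent_mul_of_isHomogeneous hf] at hzK
  by_cases hdT : d ≤ T
  · rw [if_pos hdT] at hzK
    refine ⟨hdT, _, homogeneousComponent_isHomogeneous _ g, fun hg => hzK ?_⟩
    rw [Ideal.mem_colon_span_singleton, mul_comm] at hg
    exact K.add_mem hxT hg
  · rw [if_neg hdT, add_zero] at hzK
    exact absurd hxT hzK

lemma exists_isHomogeneous_not_mem_sup_span_singleton {f : MvPolynomial σ R} {d : ℕ}
    (hf : f.IsHomogeneous d) (n : ℕ) {K : Ideal (MvPolynomial σ R)}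
    (hK : K.IsHomogeneous (homogeneousSubmodule σ R)) (hfK : f ^ n ∈ K)
    {z : MvPolynomial σ R} {T : ℕ} (hz : z.IsHomogeneous T) (hzK : z ∉ K) :
    ∃ (T' : ℕ) (z' : MvPolynomial σ R), z'.IsHomogeneous T' ∧
      z' ∉ K ⊔ Ideal.span {f} ∧ T + d ≤ T' + n * d := by
  induction n generalizing K z T with
  | zero => exact absurd ((K.eq_top_iff_one.2 (by simpa using hfK)) ▸ Submodule.mem_top) hzK
  | succ n ih =>
    by_cases hzf : z ∈ K ⊔ Ideal.span {f}
    · obtain ⟨hdT, z', hz', hz'K⟩ := exists_isHomogeneous_not_mem_colon hK hf hz hzf hzK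
      have hfn : f ^ n ∈ K.colon (Ideal.span {f}) := by
        rwa [Ideal.mem_colon_span_singleton, ← pow_succ]
      obtain ⟨T'', z'', hz'', hz''K, hT''⟩ :=
        ih (hK.colon_span_singleton hf) hfn hz' hz'K
      have hle : K ⊔ Ideal.span {f} ≤ K.colon (Ideal.span {f}) ⊔ Ideal.span {f} :=
        sup_le_sup_right (fun u hu => Ideal.mem_colon_span_singleton.2 (K.mul_mem_right f hu)) _
      exact ⟨T'', z'', hz'', fun h => hz''K (hle h), by rw [add_mul]; omega⟩
    · exact ⟨T, z, hz, hzf, Nat.add_le_add_left (Nat.le_mul_of_pos_left d n.succ_pos) T⟩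

lemma exists_isHomogeneous_not_mem_sup_span {ι : Type*} {f : ι → MvPolynomial σ R} {d : ι → ℕ}
    (hf : ∀ i, (f i).IsHomogeneous (d i)) (n : ℕ) {K : Ideal (MvPolynomial σ R)}
    (hK : K.IsHomogeneous (homogeneousSubmodule σ R)) (hfK : ∀ i, f i ^ n ∈ K)
    {z : MvPolynomial σ R} {T : ℕ} (hz : z.IsHomogeneous T) (hzK : z ∉ K) (F : Finset ι) :
    ∃ (T' : ℕ) (z' : MvPolynomial σ R), z'.IsHomogeneous T' ∧
      z' ∉ K ⊔ Ideal.span (f '' F) ∧ T + ∑ i ∈ F, d i ≤ T' + n * ∑ i ∈ F, d i := by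
  classical
  induction F using Finset.induction_on with
  | empty => exact ⟨T, z, hz, by simpa using hzK, by simp⟩
  | @insert j F hjF ih =>
    obtain ⟨T', z', hz', hz'K, hT'⟩ := ih
    have hKF : (K ⊔ Ideal.span (f '' F)).IsHomogeneous (homogeneousSubmodule σ R) :=
      hK.sup (Ideal.homogeneous_span _ _ fun _ ⟨i, _, hi⟩ => ⟨d i, hi ▸ hf i⟩)
    obtain ⟨T'', z'', hz'', hz''K, hT''⟩ := exists_isHomogeneous_not_mem_sup_span_singleton
      (hf j) n hKF (Ideal.mem_sup_left (hfK j)) hz' hz'K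
    refine ⟨T'', z'', hz'', ?_, ?_⟩
    · rwa [Finset.coe_insert, Set.image_insert_eq, Ideal.span_insert, sup_comm (Ideal.span _),
        ← sup_assoc]
    · rw [Finset.sum_insert hjF, mul_add]
      omega

section FrobeniusContraction

variable {k : Type*} [Field k]

noncomputable def frobeniusContraction (τ : k →+ k) {q : ℕ} (hq : 0 < q) (ρ : σ →₀ ℕ) :
    MvPolynomial σ k →+ MvPolynomial σ k :=
  AddMonoidAlgebra.coeffAddEquiv.symm.toAddMonoidHom.comp <|
    (Finsupp.mapRange.addMonoidHom τ).comp <|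
      (Finsupp.comapDomain.addMonoidHom
        ((add_left_injective ρ).comp (smul_right_injective _ hq.ne'))).comp
        AddMonoidAlgebra.coeffAddEquiv.toAddMonoidHom

variable (τ : k →+ k) {q : ℕ} (hq : 0 < q) {ρ : σ →₀ ℕ}

lemma coeff_frobeniusContraction (g : MvPolynomial σ k) (γ : σ →₀ ℕ) :
    coeff γ (frobeniusContraction τ hq ρ g) = τ (coeff (q • γ + ρ) g) :=
  rfl

lemma frobeniusContraction_monomial_mul (hρ : ∀ i, ρ i < q)
    (hτ : ∀ c d, τ (c ^ q * d) = c * τ d) (δ : σ →₀ ℕ) (c : k) (g : MvPolynomial σ k) :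
    frobeniusContraction τ hq ρ (monomial (q • δ) (c ^ q) * g) =
      monomial δ c * frobeniusContraction τ hq ρ g := by
  classical
  ext γ
  have hle : q • δ ≤ q • γ + ρ ↔ δ ≤ γ := by
    simp only [Finsupp.le_def, Finsupp.add_apply, Finsupp.smul_apply, smul_eq_mul]
    exact forall_congr' fun i => Nat.mul_le_mul_add_iff_le (hρ i)
  rw [coeff_frobeniusContraction, coeff_monomial_mul', coeff_monomial_mul']
  simp only [hle]
  split_ifs with hδγ
  · have hsub : q • γ + ρ - q • δ = q • (γ - δ) + ρ := by
      ext i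
      have := Nat.mul_le_mul_left q (hδγ i)
      simp only [Finsupp.add_apply, Finsupp.smul_apply, smul_eq_mul, Finsupp.tsub_apply,
        Nat.mul_sub]
      omega
    rw [hsub, hτ, coeff_frobeniusContraction]
  · exact map_zero τ

lemma frobeniusContraction_monomial_self (hτ : τ 1 = 1) :
    frobeniusContraction τ hq ρ (monomial ρ 1) = 1 := by
  classical
  ext γ
  have hγ : ρ = q • γ + ρ ↔ 0 = γ := by
    rw [eq_comm, add_eq_right, smul_eq_zero, or_iff_right hq.ne', eq_comm]
  rw [coeff_frobeniusContraction, coeff_monomial, coeff_one]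
  simp only [hγ]
  split_ifs <;> simp [hτ]

end FrobeniusContraction

lemma frobeniusContraction_pow_mul {k : Type*} [Field k] (τ : k →+ k) (p e : ℕ) [ExpChar k p]
    (hq : 0 < p ^ e) {ρ : σ →₀ ℕ}
    (hρ : ∀ i, ρ i < p ^ e) (hτ : ∀ c d, τ (c ^ p ^ e * d) = c * τ d) (a g : MvPolynomial σ k) :
    frobeniusContraction τ hq ρ (a ^ p ^ e * g) = a * frobeniusContraction τ hq ρ g := by
  induction a using MvPolynomial.induction_on' generalizing g with
  | monomial δ c => rw [monomial_pow, frobeniusContraction_monomial_mul τ hq hρ hτ]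
  | add a b ha hb => rw [add_pow_expChar_pow, add_mul, map_add, ha, hb, add_mul]

lemma mem_of_pow_mul_monomial_mem_frobPow {k : Type*} [Field k] (p e : ℕ) [ExpChar k p]
    {J : Ideal (MvPolynomial σ k)} {ρ : σ →₀ ℕ} (hρ : ∀ i, ρ i < p ^ e) {z : MvPolynomial σ k}
    (hz : z ^ p ^ e * monomial ρ 1 ∈ frobPow J (p ^ e)) : z ∈ J := by
  have hq : 0 < p ^ e := expChar_pow_pos k p e
  obtain ⟨τ, hτ1, hτ⟩ := (iterateFrobenius k p e).exists_semilinear_retraction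
  have hτq : ∀ c d, τ (c ^ p ^ e * d) = c * τ d := by simpa [iterateFrobenius_def] using hτ
  have hΦ : ∀ w ∈ frobPow J (p ^ e), ∀ g, frobeniusContraction τ hq ρ (g * w) ∈ J := by
    intro w hw
    induction hw using Submodule.span_induction with
    | mem _ hx =>
      obtain ⟨b, hb, rfl⟩ := hx
      intro g
      rw [mul_comm, frobeniusContraction_pow_mul τ p e hq hρ hτq]
      exact J.mul_mem_right _ hb
    | zero => simp
    | add x y _ _ hx hy => intro g; rw [mul_add, map_add]; exact J.add_mem (hx g) (hy g)
    | smul r x _ hx => intro g; rw [smul_eq_mul, ← mul_assoc]; exact hx _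
  simpa [frobeniusContraction_pow_mul τ p e hq hρ hτq,
    frobeniusContraction_monomial_self τ hq hτ1] using hΦ _ hz 1

theorem nu_mul_add_le_nu_frobPow_sup_span {k : Type*} [Fintype σ] [Field k] (p e : ℕ)
    [ExpChar k p] {J : Ideal (MvPolynomial σ k)} (hJ : J.IsHomogeneous (homogeneousSubmodule σ k))
    (hJtop : J ≠ ⊤) (hmJ : ∃ K, idealOfVars σ k ^ K ≤ J) {ι : Type*} [Fintype ι]
    {f : ι → MvPolynomial σ k} {d : ι → ℕ} (hf : ∀ i, (f i).IsHomogeneous (d i))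
    (hfJ : ∀ i, f i ∈ J) :
    nu (idealOfVars σ k) J * p ^ e + Fintype.card σ * (p ^ e - 1) + ∑ i, d i ≤
      nu (idealOfVars σ k) (frobPow J (p ^ e) ⊔ Ideal.span (Set.range f)) + p ^ e * ∑ i, d i := by
  set q := p ^ e
  obtain ⟨z, hz, hzJ⟩ := exists_isHomogeneous_not_mem_of_not_pow_le hJ
    (not_pow_nu_le hmJ hJtop) (pow_nu_succ_le hmJ)
  set ρ : σ →₀ ℕ := Finsupp.equivFunOnFinite.symm fun _ => q - 1
  have hρ : ∀ i, ρ i < q := fun _ => Nat.sub_lt (expChar_pow_pos k p e) one_pos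
  have hρdeg : ρ.degree = Fintype.card σ * (q - 1) := by simp [ρ, Finsupp.degree_eq_sum]
  have hw := (hz.pow q).mul (isHomogeneous_monomial (1 : k) hρdeg)
  have hwJ : z ^ q * monomial ρ 1 ∉ frobPow J q :=
    fun h => hzJ (mem_of_pow_mul_monomial_mem_frobPow p e hρ h)
  obtain ⟨T, z', hz', hz'J, hT⟩ := exists_isHomogeneous_not_mem_sup_span hf q (hJ.frobPow p e)
    (fun i => Ideal.subset_span ⟨f i, hfJ i, rfl⟩) hw hwJ Finset.univ
  rw [Finset.coe_univ, Set.image_univ] at hz'J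
  have hbdd : ∃ K, idealOfVars σ k ^ K ≤ frobPow J q ⊔ Ideal.span (Set.range f) :=
    (exists_pow_le_frobPow (idealOfVars_fg σ k) hmJ q).imp fun _ h => h.trans le_sup_left
  have hTnu := le_nu_of_not_pow_le hbdd fun h => hz'J (h hz'.mem_pow_idealOfVars)
  linarith

end MvPolynomial

theorem kustinVraciu_top_socle_degree_lower_bound_general
    (p : ℕ) (hp : p.Prime) (k : Type*) [Field k] [CharP k p]
    (N t : ℕ) (f : Fin t → MvPolynomial (Fin N) k) (df : Fin t → ℕ)
    (hfhom : ∀ i, (f i).IsHomogeneous (df i))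
    (C : Ideal (MvPolynomial (Fin N) k)) (hC : C = Ideal.span (Set.range f))
    (I : Ideal (MvPolynomial (Fin N) k ⧸ C))
    -- `I` is homogeneous: generated by images of homogeneous polynomials
    (hIhom : ∃ G : Set (MvPolynomial (Fin N) k),
        (∀ g ∈ G, ∃ d : ℕ, g.IsHomogeneous d) ∧
        I = (Ideal.span G).map (Ideal.Quotient.mk C))
    -- `I` is `m`-primary
    (hIproper : I ≠ ⊤)
    (hIprimary : ∃ K : ℕ,
        ((Ideal.span (Set.range (X : Fin N → MvPolynomial (Fin N) k))).map
            (Ideal.Quotient.mk C)) ^ K ≤ I)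
    (s : ℕ)
    (hs : s = nu ((Ideal.span (Set.range (X : Fin N → MvPolynomial (Fin N) k))).map
        (Ideal.Quotient.mk C)) I)
    (a : ℤ) (ha : a = (∑ i : Fin t, (df i : ℤ)) - N) :
    ∀ e : ℕ,
      ((s : ℤ) - a) * (p ^ e : ℕ) + a ≤
        (nu ((Ideal.span (Set.range (X : Fin N → MvPolynomial (Fin N) k))).map
            (Ideal.Quotient.mk C)) (frobPow I (p ^ e)) : ℤ) := by
  intro e
  have : ExpChar k p := ExpChar.prime hp
  set π := Ideal.Quotient.mk C
  have hπ : Function.Surjective π := Ideal.Quotient.mk_surjective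
  obtain ⟨G, hG, hIG⟩ := hIhom
  have hJ : I.comap π = Ideal.span G ⊔ C := by
    rw [hIG, Ideal.comap_map_of_surjective' π hπ, Ideal.mk_ker]
  have hJhom : (I.comap π).IsHomogeneous (MvPolynomial.homogeneousSubmodule (Fin N) k) := by
    refine hJ ▸ (Ideal.homogeneous_span _ _ hG).sup (hC ▸ Ideal.homogeneous_span _ _ ?_)
    rintro _ ⟨i, rfl⟩
    exact ⟨df i, hfhom i⟩
  have hmJ : ∃ K, MvPolynomial.idealOfVars (Fin N) k ^ K ≤ I.comap π :=
    hIprimary.imp fun K hK => by rwa [← Ideal.map_pow, Ideal.map_le_iff_le_comap] at hK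
  have hfJ : ∀ i, f i ∈ I.comap π :=
    fun i => hJ ▸ Ideal.mem_sup_right (hC ▸ Ideal.subset_span ⟨i, rfl⟩)
  have hfrob : (frobPow I (p ^ e)).comap π = frobPow (I.comap π) (p ^ e) ⊔ C := by
    conv_lhs => rw [← Ideal.map_comap_of_surjective π hπ I]
    rw [frobPow_map_of_surjective hπ, Ideal.comap_map_of_surjective' π hπ, Ideal.mk_ker]
  have key := MvPolynomial.nu_mul_add_le_nu_frobPow_sup_span p e hJhom
    (Ideal.comap_ne_top π hIproper) hmJ hfhom hfJ
  rw [← hC, ← hfrob, ← nu_map_eq_nu_comap, ← nu_map_eq_nu_comap, ← hs, Fintype.card_fin] at key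
  have hq : 1 ≤ p ^ e := Nat.one_le_pow _ _ hp.pos
  zify [hq] at key
  rw [ha]
  push_cast
  linarith

/-- **Kustin–Vraciu lower bound for top socle degrees of Frobenius powers (complete
intersection case).**  For `R = k[x_1,…,x_N]/(f_1,…,f_t)` a graded complete intersection,
`I ⊆ R` a homogeneous `m`-primary ideal, `s = max { r : m^r ⊄ I }` and
`a = (Σ deg f_i) − N` the `a`-invariant, one has for every `q = p^e`:
`max { r : m^r ⊄ I^{[q]} } ≥ (s − a)q + a`. -/
theorem kustinVraciu_top_socle_degree_lower_bound
    (p : ℕ) (hp : p.Prime) (k : Type*) [Field k] [CharP k p]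
    (N t : ℕ) (f : Fin t → MvPolynomial (Fin N) k) (df : Fin t → ℕ)
    (hdfpos : ∀ i, 0 < df i)
    (hfhom : ∀ i, (f i).IsHomogeneous (df i))
    -- `f` is a regular sequence: each `f i` is a nonzerodivisor modulo its predecessors
    (hreg : ∀ (i : Fin t) (g : MvPolynomial (Fin N) k),
        g * f i ∈ Ideal.span (f '' {j | j < i}) → g ∈ Ideal.span (f '' {j | j < i}))
    (C : Ideal (MvPolynomial (Fin N) k)) (hC : C = Ideal.span (Set.range f))
    (I : Ideal (MvPolynomial (Fin N) k ⧸ C))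
    -- `I` is homogeneous: generated by images of homogeneous polynomials
    (hIhom : ∃ G : Set (MvPolynomial (Fin N) k),
        (∀ g ∈ G, ∃ d : ℕ, g.IsHomogeneous d) ∧
        I = (Ideal.span G).map (Ideal.Quotient.mk C))
    -- `I` is `m`-primary
    (hIproper : I ≠ ⊤)
    (hIprimary : ∃ K : ℕ,
        ((Ideal.span (Set.range (X : Fin N → MvPolynomial (Fin N) k))).map
            (Ideal.Quotient.mk C)) ^ K ≤ I)
    (s : ℕ)
    (hs : s = nu ((Ideal.span (Set.range (X : Fin N → MvPolynomial (Fin N) k))).map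
        (Ideal.Quotient.mk C)) I)
    (a : ℤ) (ha : a = (∑ i : Fin t, (df i : ℤ)) - N) :
    ∀ e : ℕ,
      ((s : ℤ) - a) * (p ^ e : ℕ) + a ≤
        (nu ((Ideal.span (Set.range (X : Fin N → MvPolynomial (Fin N) k))).map
            (Ideal.Quotient.mk C)) (frobPow I (p ^ e)) : ℤ) :=
  kustinVraciu_top_socle_degree_lower_bound_general p hp k N t f df hfhom C hC I hIhom hIproper
    hIprimary s hs a ha
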